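/- The function F(x) = 1 - x⁴ - 4x²·ψ'(1/(1-x)) is strictly decreasing on (0,1). -/

import Mathlib

/-!
Both series bounds come from telescoping: `1/(n+y)² ≥ 1/(n+y) - 1/(n+1+y)` gives
`ψ'(y) ≥ 1/y`, and `1/(n+y)³ ≤ g n - g (n+1)` with `g n = 1/(2 (n+y-1/2)²)` gives
`ψ''(y) ≥ -1/(y-1/2)²`. Substituting `y = 1/(1-x)` into
`F'(x) = -4x³ - 8x ψ'(y) - 4x² y² ψ''(y)` yields `F'(x) ≤ -4x³ - 8x(1-x) + 16x²/(1+x)²`,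
which is negative on `(0,1)` because `(x²-2x+2)(1+x)² - 4x = (1-x)²(x²+2x+2)`.
-/

open Real Filter Asymptotics MeasureTheory Set Topology

noncomputable def trigamma (y : ℝ) : ℝ := ∑' m : ℕ, 1 / (m + y)^2

noncomputable def psi2 (y : ℝ) : ℝ := -2 * ∑' m : ℕ, 1 / (m + y)^3

lemma summable_one_div_add_pow {y : ℝ} (hy : 0 < y) {k : ℕ} (hk : 2 ≤ k) :
    Summable fun m : ℕ => 1 / ((m : ℝ) + y) ^ k :=
  ((Real.summable_one_div_nat_add_rpow y k).2 (by exact_mod_cast hk)).congr fun m => by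
    rw [abs_of_pos (by positivity), Real.rpow_natCast]

lemma hasSum_sub_succ_of_antitone {g : ℕ → ℝ} {l : ℝ} (hg : Antitone g)
    (hl : Tendsto g atTop (𝓝 l)) : HasSum (fun n => g n - g (n + 1)) (g 0 - l) := by
  rw [hasSum_iff_tendsto_nat_of_nonneg fun n => sub_nonneg.2 (hg n.le_succ)]
  simp_rw [Finset.sum_range_sub']
  exact tendsto_const_nhds.sub hl

lemma tendsto_inv_natCast_add_atTop (a : ℝ) :
    Tendsto (fun n : ℕ => ((n : ℝ) + a)⁻¹) atTop (𝓝 0) :=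
  (tendsto_atTop_add_const_right _ a tendsto_natCast_atTop_atTop).inv_tendsto_atTop

lemma inv_le_trigamma {y : ℝ} (hy : 0 < y) : y⁻¹ ≤ trigamma y := by
  set g : ℕ → ℝ := fun n => ((n : ℝ) + y)⁻¹
  have hg : Antitone g := antitone_nat_of_succ_le fun n => by
    simp only [g]; gcongr; linarith
  have htel := hasSum_sub_succ_of_antitone hg (tendsto_inv_natCast_add_atTop y)
  simp only [g, Nat.cast_zero, zero_add, sub_zero] at htel
  refine hasSum_le (fun n => ?_) htel (summable_one_div_add_pow hy le_rfl).hasSum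
  have hn : 0 < (n : ℝ) + y := by positivity
  rw [Nat.cast_succ, inv_sub_inv hn.ne' (by positivity),
    div_le_div_iff₀ (by positivity) (by positivity)]
  nlinarith

lemma neg_inv_sq_le_psi2 {y : ℝ} (hy : 1 / 2 < y) : -((y - 1 / 2) ^ 2)⁻¹ ≤ psi2 y := by
  obtain ⟨c, hc, rfl⟩ : ∃ c, 0 < c ∧ y = c + 1 / 2 := ⟨y - 1 / 2, by linarith, by ring⟩
  set g : ℕ → ℝ := fun n => (2 * ((n : ℝ) + c) ^ 2)⁻¹
  have hterm : ∀ n : ℕ, 1 / ((n : ℝ) + (c + 1 / 2)) ^ 3 ≤ g n - g (n + 1) := fun n => by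
    have ht : 0 < (n : ℝ) + c := by positivity
    simp only [g, Nat.cast_succ]
    rw [inv_sub_inv (by positivity) (by positivity),
      div_le_div_iff₀ (by positivity) (by positivity)]
    nlinarith [sq_nonneg (((n : ℝ) + c) * ((n : ℝ) + c + 1)), sq_nonneg ((n : ℝ) + c)]
  have hg : Antitone g := antitone_nat_of_succ_le fun n => by
    have : 0 ≤ 1 / ((n : ℝ) + (c + 1 / 2)) ^ 3 := by positivity
    linarith [hterm n]
  have hlim : Tendsto g atTop (𝓝 0) := by
    simpa [g, mul_inv, inv_pow] using ((tendsto_inv_natCast_add_atTop c).pow 2).mul_const 2⁻¹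
  have htel := hasSum_sub_succ_of_antitone hg hlim
  have hle := hasSum_le hterm
    (htel.summable.of_nonneg_of_le (fun n => by positivity) hterm).hasSum htel
  simp only [g, Nat.cast_zero, zero_add, sub_zero, mul_inv] at hle
  rw [psi2, add_sub_cancel_right]
  linarith

lemma hasDerivAt_trigamma {y : ℝ} (hy : 0 < y) : HasDerivAt trigamma (psi2 y) y := by
  have hy₂ : 0 < y / 2 := half_pos hy
  have hderiv : ∀ (m : ℕ) (z : ℝ), z ∈ Ioi (y / 2) →
      HasDerivAt (fun z => 1 / ((m : ℝ) + z) ^ 2) (-2 * (1 / ((m : ℝ) + z) ^ 3)) z :=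
    fun m z hz => by
      have hz : 0 < (m : ℝ) + z := by have : 0 < z := hy₂.trans hz; positivity
      have hsq : HasDerivAt (fun z => ((m : ℝ) + z) ^ 2) (2 * ((m : ℝ) + z)) z := by
        simpa using ((hasDerivAt_id z).const_add (m : ℝ)).fun_pow 2
      exact ((hasDerivAt_const z 1).div hsq (by positivity)).congr_deriv (by field_simp; ring)
  have hbound : ∀ (m : ℕ) (z : ℝ), z ∈ Ioi (y / 2) →
      ‖-2 * (1 / ((m : ℝ) + z) ^ 3)‖ ≤ 2 * (1 / ((m : ℝ) + y / 2) ^ 3) := fun m z hz => by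
    have hz : y / 2 < z := hz
    have : 0 < z := hy₂.trans hz
    rw [norm_mul, norm_neg, Real.norm_two, Real.norm_of_nonneg (by positivity)]
    gcongr
  have h := hasDerivAt_tsum_of_isPreconnected ((summable_one_div_add_pow hy₂
    (by norm_num : 2 ≤ 3)).mul_left 2) isOpen_Ioi isPreconnected_Ioi hderiv hbound
    (half_lt_self hy) (summable_one_div_add_pow hy le_rfl) (half_lt_self hy)
  rwa [tsum_mul_left] at h

lemma hasDerivAt_trigamma_one_div_one_sub {x : ℝ} (hx : x < 1) :
    HasDerivAt (fun x => trigamma (1 / (1 - x))) (psi2 (1 / (1 - x)) * (1 / (1 - x)) ^ 2) x := by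
  have h1x : 0 < 1 - x := by linarith
  exact (hasDerivAt_trigamma (by positivity)).comp x <|
    ((hasDerivAt_const x 1).div ((hasDerivAt_id x).const_sub 1) h1x.ne').congr_deriv (by simp)

lemma neg_le_psi2_one_div_one_sub_mul_sq {x : ℝ} (hx₀ : -1 < x) (hx₁ : x < 1) :
    -(4 / (1 + x) ^ 2) ≤ psi2 (1 / (1 - x)) * (1 / (1 - x)) ^ 2 := by
  have h1x : 0 < 1 - x := by linarith
  have hy : 1 / (1 - x) - 1 / 2 = (1 + x) / (2 * (1 - x)) := by field_simp; ring
  have h := neg_inv_sq_le_psi2 (y := 1 / (1 - x))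
    (by rw [← sub_pos, hy]; exact div_pos (by linarith) (by positivity))
  rw [hy] at h
  calc -(4 / (1 + x) ^ 2) = -(((1 + x) / (2 * (1 - x))) ^ 2)⁻¹ * (1 / (1 - x)) ^ 2 := by
        field_simp; ring
    _ ≤ psi2 (1 / (1 - x)) * (1 / (1 - x)) ^ 2 := by gcongr

lemma hasDerivAt_one_sub_pow_four_sub_trigamma {x : ℝ} (hx : x < 1) :
    HasDerivAt (fun x : ℝ => 1 - x ^ 4 - 4 * x ^ 2 * trigamma (1 / (1 - x)))
      (-(4 * x ^ 3) - (8 * x * trigamma (1 / (1 - x)) +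
        4 * x ^ 2 * (psi2 (1 / (1 - x)) * (1 / (1 - x)) ^ 2))) x :=
  (((hasDerivAt_pow 4 x).const_sub 1).sub (((hasDerivAt_pow 2 x).const_mul 4).mul
    (hasDerivAt_trigamma_one_div_one_sub hx))).congr_deriv (by push_cast; ring)

theorem stmt5 :
    StrictAntiOn (fun x : ℝ => 1 - x^4 - 4*x^2 * trigamma (1/(1-x))) (Set.Ioo 0 1) := by
  refine strictAntiOn_of_deriv_neg (convex_Ioo 0 1)
    (fun x hx => (hasDerivAt_one_sub_pow_four_sub_trigamma hx.2).continuousAt.continuousWithinAt)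
    fun x hx => ?_
  rw [interior_Ioo] at hx
  rw [(hasDerivAt_one_sub_pow_four_sub_trigamma hx.2).deriv]
  obtain ⟨hx₀, hx₁⟩ := hx
  have hT : 1 - x ≤ trigamma (1 / (1 - x)) := by
    simpa using inv_le_trigamma (y := 1 / (1 - x)) (by simpa using hx₁)
  have hP := neg_le_psi2_one_div_one_sub_mul_sq (by linarith) hx₁
  have hpoly : 16 * x ^ 2 / (1 + x) ^ 2 < 4 * x ^ 3 + 8 * x * (1 - x) := by
    rw [div_lt_iff₀ (by positivity)]
    have hq : 0 < x ^ 2 + 2 * x + 2 := by positivity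
    nlinarith [mul_pos hx₀ (mul_pos (pow_pos (sub_pos.2 hx₁) 2) hq)]
  have hT' := mul_le_mul_of_nonneg_left hT (by positivity : 0 ≤ 8 * x)
  have hP' := mul_le_mul_of_nonneg_left hP (by positivity : 0 ≤ 4 * x ^ 2)
  have h16 : 4 * x ^ 2 * -(4 / (1 + x) ^ 2) = -(16 * x ^ 2 / (1 + x) ^ 2) := by ring
  linarith
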